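/- arXiv:1102.1248 — 2 statements merged into one kernel-verified Lean document; each statement's English description precedes it below -/
import Mathlib

section
/- Let b, d ≥ 1, let ω ∈ ℝ^b, n, Δn ∈ ℝ^b, j, Δj ∈ ℝ^d, and ε, ε' ∈ {+1, −1}. Assume ε(n·ω) + √(|j|²+1) = 0 and ε'((n+Δn)·ω) + √(|j+Δj|²+1) = 0. Then (2⟨j,Δj⟩ + |Δj|² − (Δn·ω)²)² = 4(Δn·ω)²(|j|²+1); equivalently, writing j = (j_1,…,j_d) and Δj = (Δj_1,…,Δj_d), one has Σ_{m=1}^d a_m j_m² + Σ_{1≤m<m'≤d} b_{mm'} j_m j_{m'} + Σ_{m=1}^d c_m j_m + W = 0, where a_m = 4(Δj_m)² − 4(Δn·ω)², b_{mm'} = 8 Δj_m Δj_{m'}, c_m = (4|Δj|² − 4(Δn·ω)²)Δj_m, and W = (|Δj|² − (Δn·ω)²)² − 4(Δn·ω)². -/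
/-!
Whatever the signs ε, ε', squaring the two characteristic equations gives
(n·ω)² = |j|² + 1 and ((n + Δn)·ω)² = |j + Δj|² + 1. Their difference is
2 (n·ω)(Δn·ω) = 2⟨j, Δj⟩ + |Δj|² − (Δn·ω)², and squaring this once more eliminates n·ω
through the first relation. The second identity is the first one expanded in coordinates,
with the cross terms of ⟨j, Δj⟩² collected over the pairs m < m'.
-/

open Finset

theorem sq_sum_eq_sum_sq_add_two_mul_sum_lt {ι R : Type*} [Fintype ι] [LinearOrder ι]
    [CommSemiring R] (f : ι → R) :
    (∑ i, f i) ^ 2 = ∑ i, f i ^ 2 + 2 * ∑ q : {q : ι × ι // q.1 < q.2}, f q.1.1 * f q.1.2 := by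
  have hsplit : ∀ p : ι × ι, f p.1 * f p.2 =
      (if p.1 < p.2 then f p.1 * f p.2 else 0) + (if p.2 < p.1 then f p.2 * f p.1 else 0)
        + (if p.1 = p.2 then f p.1 * f p.2 else 0) := by
    rintro ⟨i, j⟩
    rcases lt_trichotomy i j with h | rfl | h
    · simp [h, h.not_gt, h.ne]
    · simp
    · simp [h, h.not_gt, h.ne', mul_comm]
  have hlt : ∑ p : ι × ι, (if p.1 < p.2 then f p.1 * f p.2 else 0)
      = ∑ q : {q : ι × ι // q.1 < q.2}, f q.1.1 * f q.1.2 := by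
    rw [← sum_filter, sum_subtype]
    simp
  have hgt : ∑ p : ι × ι, (if p.2 < p.1 then f p.2 * f p.1 else 0)
      = ∑ p : ι × ι, (if p.1 < p.2 then f p.1 * f p.2 else 0) :=
    Fintype.sum_equiv (Equiv.prodComm ι ι) _ _ fun _ => rfl
  have hdiag : ∑ p : ι × ι, (if p.1 = p.2 then f p.1 * f p.2 else 0) = ∑ i, f i ^ 2 := by
    simp [Fintype.sum_prod_type, sq]
  rw [sq, sum_mul_sum, ← Fintype.sum_prod_type', Fintype.sum_congr _ _ hsplit,
    sum_add_distrib, sum_add_distrib, hgt, hdiag, hlt]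
  ring

theorem sum_add_sq_eq {ι R : Type*} (s : Finset ι) [CommSemiring R] (a b : ι → R) :
    ∑ i ∈ s, (a i + b i) ^ 2 = ∑ i ∈ s, a i ^ 2 + 2 * ∑ i ∈ s, a i * b i + ∑ i ∈ s, b i ^ 2 := by
  simp only [add_sq, sum_add_distrib, mul_sum, mul_assoc]

theorem sq_eq_of_mul_add_sqrt_eq_zero {ε x y : ℝ} (hε : ε ^ 2 = 1) (hy : 0 ≤ y)
    (h : ε * x + √y = 0) : x ^ 2 = y := by
  calc x ^ 2 = (ε * x) ^ 2 := by rw [mul_pow, hε, one_mul]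
    _ = √y ^ 2 := by rw [eq_neg_of_add_eq_zero_left h, neg_sq]
    _ = y := Real.sq_sqrt hy

theorem sub_sq_sq_eq_of_sq_eq_of_add_sq_eq {R : Type*} [CommRing R] {N T A D : R}
    (hN : N ^ 2 = A) (hNT : (N + T) ^ 2 = A + D) : (D - T ^ 2) ^ 2 = 4 * T ^ 2 * A := by
  have hD : D - T ^ 2 = 2 * N * T := by linear_combination hN - hNT
  rw [hD, ← hN]
  ring

theorem quadratic_form_eq_sq_sub {ι R : Type*} [Fintype ι] [LinearOrder ι] [CommRing R]
    (j Δj : ι → R) (T : R) :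
    (∑ m, (4 * Δj m ^ 2 - 4 * T ^ 2) * j m ^ 2)
      + (∑ q : {q : ι × ι // q.1 < q.2}, 8 * Δj q.1.1 * Δj q.1.2 * j q.1.1 * j q.1.2)
      + (∑ m, (4 * (∑ m', Δj m' ^ 2) - 4 * T ^ 2) * Δj m * j m)
      + ((∑ m, Δj m ^ 2 - T ^ 2) ^ 2 - 4 * T ^ 2)
      = (2 * (∑ m, j m * Δj m) + ∑ m, Δj m ^ 2 - T ^ 2) ^ 2
        - 4 * T ^ 2 * (∑ m, j m ^ 2 + 1) := by
  have hsq := sq_sum_eq_sum_sq_add_two_mul_sum_lt (fun m => j m * Δj m)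
  have hdiag : ∑ m, (4 * Δj m ^ 2 - 4 * T ^ 2) * j m ^ 2
      = 4 * ∑ m, (j m * Δj m) ^ 2 - 4 * T ^ 2 * ∑ m, j m ^ 2 := by
    rw [mul_sum, mul_sum, ← sum_sub_distrib]
    exact sum_congr rfl fun m _ => by ring
  have hoff : ∑ q : {q : ι × ι // q.1 < q.2}, 8 * Δj q.1.1 * Δj q.1.2 * j q.1.1 * j q.1.2
      = 8 * ∑ q : {q : ι × ι // q.1 < q.2}, j q.1.1 * Δj q.1.1 * (j q.1.2 * Δj q.1.2) := by
    rw [mul_sum]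
    exact sum_congr rfl fun q _ => by ring
  have hlin : ∑ m, (4 * (∑ m', Δj m' ^ 2) - 4 * T ^ 2) * Δj m * j m
      = (4 * (∑ m', Δj m' ^ 2) - 4 * T ^ 2) * ∑ m, j m * Δj m := by
    rw [mul_sum univ (fun m => j m * Δj m)]
    exact sum_congr rfl fun m _ => by ring
  rw [hdiag, hoff, hlin]
  linear_combination -4 * hsq

theorem characteristic_difference_quadratic_equation_general
    {b d : ℕ}
    (ω n Δn : Fin b → ℝ) (j Δj : Fin d → ℝ) (ε ε' : ℝ)
    (hε : ε = 1 ∨ ε = -1) (hε' : ε' = 1 ∨ ε' = -1)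
    (h1 : ε * (∑ k, n k * ω k) + Real.sqrt ((∑ m, (j m)^2) + 1) = 0)
    (h2 : ε' * (∑ k, (n k + Δn k) * ω k) + Real.sqrt ((∑ m, (j m + Δj m)^2) + 1) = 0) :
    (2 * (∑ m, j m * Δj m) + (∑ m, (Δj m)^2) - (∑ k, Δn k * ω k)^2)^2
      = 4 * (∑ k, Δn k * ω k)^2 * ((∑ m, (j m)^2) + 1) ∧
    (∑ m, (4 * (Δj m)^2 - 4 * (∑ k, Δn k * ω k)^2) * (j m)^2)
      + (∑ q : {q : Fin d × Fin d // q.1 < q.2},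
          8 * Δj q.1.1 * Δj q.1.2 * j q.1.1 * j q.1.2)
      + (∑ m, (4 * (∑ m', (Δj m')^2) - 4 * (∑ k, Δn k * ω k)^2) * Δj m * j m)
      + (((∑ m, (Δj m)^2) - (∑ k, Δn k * ω k)^2)^2 - 4 * (∑ k, Δn k * ω k)^2) = 0 := by
  have sign_sq : ∀ {e : ℝ}, e = 1 ∨ e = -1 → e ^ 2 = 1 := by
    rintro e (rfl | rfl) <;> norm_num
  have hN := sq_eq_of_mul_add_sqrt_eq_zero (sign_sq hε) (by positivity) h1
  have hNT : (∑ k, n k * ω k + ∑ k, Δn k * ω k) ^ 2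
      = (∑ m, j m ^ 2 + 1) + (2 * ∑ m, j m * Δj m + ∑ m, Δj m ^ 2) := by
    have h := sq_eq_of_mul_add_sqrt_eq_zero (sign_sq hε') (by positivity) h2
    simp only [add_mul, sum_add_distrib, sum_add_sq_eq] at h
    linear_combination h
  have key := sub_sq_sq_eq_of_sq_eq_of_add_sq_eq hN hNT
  refine ⟨key, ?_⟩
  rw [quadratic_form_eq_sq_sub, key, sub_self]

/-- two points on the characteristics differing by (Δn, Δj) satisfy the
quadratic equation obtained by eliminating the n-variables and squaring. -/
theorem characteristic_difference_quadratic_equation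
    {b d : ℕ} (hb : 1 ≤ b) (hd : 1 ≤ d)
    (ω n Δn : Fin b → ℝ) (j Δj : Fin d → ℝ) (ε ε' : ℝ)
    (hε : ε = 1 ∨ ε = -1) (hε' : ε' = 1 ∨ ε' = -1)
    (h1 : ε * (∑ k, n k * ω k) + Real.sqrt ((∑ m, (j m)^2) + 1) = 0)
    (h2 : ε' * (∑ k, (n k + Δn k) * ω k) + Real.sqrt ((∑ m, (j m + Δj m)^2) + 1) = 0) :
    (2 * (∑ m, j m * Δj m) + (∑ m, (Δj m)^2) - (∑ k, Δn k * ω k)^2)^2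
      = 4 * (∑ k, Δn k * ω k)^2 * ((∑ m, (j m)^2) + 1) ∧
    (∑ m, (4 * (Δj m)^2 - 4 * (∑ k, Δn k * ω k)^2) * (j m)^2)
      + (∑ q : {q : Fin d × Fin d // q.1 < q.2},
          8 * Δj q.1.1 * Δj q.1.2 * j q.1.1 * j q.1.2)
      + (∑ m, (4 * (∑ m', (Δj m')^2) - 4 * (∑ k, Δn k * ω k)^2) * Δj m * j m)
      + (((∑ m, (Δj m)^2) - (∑ k, Δn k * ω k)^2)^2 - 4 * (∑ k, Δn k * ω k)^2) = 0 :=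
  characteristic_difference_quadratic_equation_general ω n Δn j Δj ε ε' hε hε' h1 h2
end

section
/- Assume the genericity conditions (i) and (ii) hold. Then for every B'-tuple of pairwise distinct elements (Δn_i, Δj_i) ∈ 𝒜∖𝒢 with Δj_i ≠ 0 for all i = 1,…,B', the linear system of B' equations in the B'−1 real unknowns (x_1,…,x_d, y_1,…,y_{d(d−1)/2}, z_1,…,z_d), namely Σ_{m=1}^d a_m^{(i)} x_m + Σ_{ℓ=1}^{d(d−1)/2} b_ℓ^{(i)} y_ℓ + Σ_{m=1}^d c_m^{(i)} z_m + W^{(i)} = 0 for i = 1,…,B' (where (a^{(i)}, b^{(i)}, c^{(i)}) = L_i and W^{(i)} = W_i are the coefficients associated with (Δn_i, Δj_i)), has no solution. -/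
open scoped BigOperators

namespace NLW

noncomputable def dotP {b : ℕ} (ω : Fin b → ℝ) (n : Fin b → ℤ) : ℝ := ∑ k, (n k : ℝ) * ω k

noncomputable def sqnorm {d : ℕ} (v : Fin d → ℤ) : ℝ := ∑ m, ((v m : ℝ))^2

noncomputable def omega0 {b d : ℕ} (j : Fin b → Fin d → ℤ) : Fin b → ℝ :=
  fun k => Real.sqrt (sqnorm (j k) + 1)

abbrev Idx (b d : ℕ) := (Fin b → ℤ) × (Fin d → ℤ)

def Gamma {b d : ℕ} (p : ℕ) (j : Fin b → Fin d → ℤ) : Set (Idx b d) :=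
  {x | ∃ P P' : Fin b → ℕ, (∑ k, (P k + P' k)) = p ∧
        x.1 = (fun k => (P' k : ℤ) - (P k : ℤ)) ∧
        x.2 = (fun m => ∑ k, ((P k : ℤ) - (P' k : ℤ)) * j k m)}

def Bprime (d : ℕ) : ℕ := (d+1)*(d+2)/2

def Bconst (b d : ℕ) : ℕ := Bprime d + b*(b+1)

def AmbSet {b d : ℕ} (p : ℕ) (j : Fin b → Fin d → ℤ) : Set (Idx b d) :=
  {x | ∃ l : List (Idx b d), l.length ≤ Bconst b d ∧ (∀ y ∈ l, y ∈ Gamma p j) ∧ x = l.sum}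

noncomputable def Wfun {b d : ℕ} (j : Fin b → Fin d → ℤ) (x : Idx b d) : ℝ :=
  (sqnorm x.2 - (dotP (omega0 j) x.1)^2)^2 - 4*(dotP (omega0 j) x.1)^2

abbrev LIdx (d : ℕ) := Fin d ⊕ ({q : Fin d × Fin d // q.1 < q.2} ⊕ Fin d)

noncomputable def Lfun {b d : ℕ} (j : Fin b → Fin d → ℤ) (x : Idx b d) : LIdx d → ℝ :=
  fun i => match i with
  | Sum.inl m => 4*((x.2 m : ℝ))^2 - 4*(dotP (omega0 j) x.1)^2
  | Sum.inr (Sum.inl q) => 8*(x.2 q.1.1 : ℝ)*(x.2 q.1.2 : ℝ)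
  | Sum.inr (Sum.inr m) => (4*sqnorm x.2 - 4*(dotP (omega0 j) x.1)^2) * (x.2 m : ℝ)

def unitE {b : ℕ} (k : Fin b) : Fin b → ℤ := fun i => if i = k then 1 else 0

def DegSet {b d : ℕ} (j : Fin b → Fin d → ℤ) : Set (Idx b d) :=
  {x | ∃ α : ℤ, α ≠ 0 ∧
        ((∃ k k' : Fin b, k ≠ k' ∧
            x = α • ((unitE k' - unitE k, fun m => j k m - j k' m) : Idx b d)) ∨
         (∃ k : Fin b, x = α • ((-unitE k, fun m => j k m) : Idx b d)))}

def GenericI {b d : ℕ} (p : ℕ) (j : Fin b → Fin d → ℤ) : Prop :=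
  ∀ x ∈ AmbSet p j, x ≠ 0 →
    sqnorm x.2 + (dotP (omega0 j) x.1)^2 ≠ 0 ∧
    sqnorm x.2 - (dotP (omega0 j) x.1)^2 ≠ 0 ∧
    Wfun j x ≠ 0

def GenericII {b d : ℕ} (p : ℕ) (j : Fin b → Fin d → ℤ) : Prop :=
  ∀ E : Fin (Bprime d) → Idx b d,
    Function.Injective E →
    (∀ i, E i ∈ AmbSet p j ∧ E i ∉ DegSet j ∧ (E i).2 ≠ 0) →
    ∀ ρ : ℕ, 1 ≤ ρ → ρ ≤ Bprime d - 1 →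
    ∀ r : Fin (ρ+1) → Fin (Bprime d), Function.Injective r →
    ∀ c : Fin ρ → LIdx d, Function.Injective c →
    (∀ i0 : Fin (ρ+1),
      Matrix.det (Matrix.of fun u v : Fin ρ => Lfun j (E (r (i0.succAbove u))) (c v)) ≠ 0) →
    Matrix.det (Matrix.of fun u v : Fin (ρ+1) =>
      if h : (v : ℕ) < ρ then Lfun j (E (r u)) (c ⟨v, h⟩) else Wfun j (E (r u))) ≠ 0

def Chars {b d : ℕ} (j : Fin b → Fin d → ℤ) : Set (Idx b d) :=
  {x | dotP (omega0 j) x.1 + Real.sqrt (sqnorm x.2 + 1) = 0 ∨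
       -(dotP (omega0 j) x.1) + Real.sqrt (sqnorm x.2 + 1) = 0}

def SpSet {b d : ℕ} (j : Fin b → Fin d → ℤ) : Set (Idx b d) :=
  {x | ∃ k : Fin b, x = (-unitE k, fun m => j k m) ∨ x = (unitE k, fun m => -(j k m))}

def GenericIII {b d : ℕ} (p : ℕ) (j : Fin b → Fin d → ℤ) : Prop :=
  ∀ l : List (Idx b d), l.length = p + 1 → (∀ y ∈ l, y ∈ SpSet j) →
    l.sum ∈ Chars j → l.sum ∈ SpSet j

end NLW

/-! Descent on solvable subsystems of `ρ + 1` equations in `ρ` unknowns, starting from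
`ρ = B' - 1`. If all `ρ × ρ` minors of the coefficient matrix are nonzero, appending `1` to a
solution gives a kernel vector of the augmented `(ρ + 1) × (ρ + 1)` matrix, which genericity (ii)
forbids. Otherwise some minor vanishes; moving the solution along a kernel vector of that minor
kills one unknown, and dropping it together with the equation outside the minor leaves a solvable
subsystem one size smaller. At `ρ = 0` the system reads `W = 0`, which genericity (i) excludes. -/

open Matrix Function

section

variable {K : Type*} [Field K]

theorem Matrix.det_of_snoc_eq_zero_of_mulVec_add_eq_zero {ρ : ℕ}
    {A : Matrix (Fin (ρ + 1)) (Fin ρ) K} {w : Fin (ρ + 1) → K} {y : Fin ρ → K}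
    (h : A *ᵥ y + w = 0) : (of fun u => Fin.snoc (A u) (w u)).det = 0 :=
  exists_mulVec_eq_zero_iff.mp
    ⟨Fin.snoc y (1 : K), fun h0 => by simpa using congrFun h0 (Fin.last ρ), by
      ext u
      simpa [mulVec, dotProduct, Fin.sum_univ_castSucc] using congrFun h u⟩

theorem Matrix.exists_submatrix_succAbove_mulVec_add_eq_zero {m : Type*} {ρ : ℕ}
    {A : Matrix m (Fin (ρ + 1)) K} {w : m → K} {y g : Fin (ρ + 1) → K}
    (hy : A *ᵥ y + w = 0) (hg₀ : g ≠ 0) (hg : A *ᵥ g = 0) :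
    ∃ v₀ : Fin (ρ + 1), ∃ y' : Fin ρ → K, A.submatrix id v₀.succAbove *ᵥ y' + w = 0 := by
  obtain ⟨v₀, hv₀⟩ : ∃ v₀, g v₀ ≠ 0 := Function.ne_iff.mp hg₀
  set z := y - (y v₀ / g v₀) • g with hz_def
  have hz : A *ᵥ z + w = 0 := by
    rw [hz_def, mulVec_sub, mulVec_smul, hg, smul_zero, sub_zero, hy]
  have hzv₀ : z v₀ = 0 := by simp [hz_def, div_mul_cancel₀ _ hv₀]
  refine ⟨v₀, z ∘ v₀.succAbove, funext fun u => ?_⟩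
  simpa [mulVec, dotProduct, Fin.sum_univ_succAbove _ v₀, hzv₀] using congrFun hz u

variable {κ ι : Type*}

def AugmentedMinorsNonsingular (M : Matrix κ ι K) (w : κ → K) : Prop :=
  ∀ ρ : ℕ, 1 ≤ ρ → ∀ r : Fin (ρ + 1) → κ, Injective r → ∀ c : Fin ρ → ι, Injective c →
    (∀ i₀ : Fin (ρ + 1), (M.submatrix (r ∘ i₀.succAbove) c).det ≠ 0) →
    (of fun u => Fin.snoc (M.submatrix r c u) (w (r u))).det ≠ 0

variable {M : Matrix κ ι K} {w : κ → K}

theorem AugmentedMinorsNonsingular.submatrix_mulVec_add_ne_zero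
    (hM : AugmentedMinorsNonsingular M w) (hw : ∀ i, w i ≠ 0) (ρ : ℕ)
    (r : Fin (ρ + 1) → κ) (hr : Injective r) (c : Fin ρ → ι) (hc : Injective c)
    (y : Fin ρ → K) : M.submatrix r c *ᵥ y + w ∘ r ≠ 0 := by
  induction ρ with
  | zero =>
    intro hy
    exact hw (r 0) (by simpa [mulVec, dotProduct] using congrFun hy 0)
  | succ ρ ih =>
    intro hy
    by_cases hsingular : ∃ s : Fin (ρ + 2), (M.submatrix (r ∘ s.succAbove) c).det = 0
    · obtain ⟨s, hs⟩ := hsingular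
      obtain ⟨g, hg₀, hg⟩ := exists_mulVec_eq_zero_iff.mpr hs
      obtain ⟨v₀, y', hy'⟩ := exists_submatrix_succAbove_mulVec_add_eq_zero
        (A := M.submatrix (r ∘ s.succAbove) c) (w := w ∘ r ∘ s.succAbove)
        (funext fun u => congrFun hy (s.succAbove u)) hg₀ hg
      exact ih (r ∘ s.succAbove) (hr.comp Fin.succAbove_right_injective)
        (c ∘ v₀.succAbove) (hc.comp Fin.succAbove_right_injective) y' hy'
    · exact hM (ρ + 1) ρ.succ_pos r hr c hc (fun s hs => hsingular ⟨s, hs⟩)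
        (det_of_snoc_eq_zero_of_mulVec_add_eq_zero hy)

theorem AugmentedMinorsNonsingular.mulVec_add_ne_zero [Fintype ι] [Fintype κ]
    (hM : AugmentedMinorsNonsingular M w) (hw : ∀ i, w i ≠ 0)
    (hcard : Fintype.card ι < Fintype.card κ) (x : ι → K) : M *ᵥ x + w ≠ 0 := by
  intro hx
  let c := (Fintype.equivFin ι).symm
  let r : Fin (Fintype.card ι + 1) ↪ κ :=
    (Fin.castLEEmb hcard).trans (Fintype.equivFin κ).symm.toEmbedding
  refine hM.submatrix_mulVec_add_ne_zero hw _ r r.injective c c.injective (x ∘ c)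
    (funext fun u => ?_)
  simpa [mulVec, dotProduct, ← c.sum_comp] using congrFun hx (r u)

end

namespace NLW

theorem card_LIdx_add_one (d : ℕ) : Fintype.card (LIdx d) + 1 = Bprime d := by
  have hpairs : Fintype.card {q : Fin d × Fin d // q.1 < q.2} = d.choose 2 := by
    rw [Fintype.card_subtype, Fintype.card_product_filter_lt, Fintype.card_fin]
  have hB : Bprime d = (d + 2).choose 2 := by
    rw [Nat.choose_two_right, Bprime, mul_comm]; rfl
  rw [hB, Nat.choose_succ_succ' (d + 1) 1, Nat.choose_succ_succ' d 1]
  simp only [LIdx, Fintype.card_sum, Fintype.card_fin, hpairs, Nat.choose_one_right,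
    Nat.reduceAdd]
  omega

theorem GenericI.wfun_ne_zero {b d p : ℕ} {j : Fin b → Fin d → ℤ} (hI : GenericI p j)
    {x : Idx b d} (hx : x ∈ AmbSet p j) (hx₂ : x.2 ≠ 0) : Wfun j x ≠ 0 :=
  (hI x hx (fun h => hx₂ (by rw [h]; rfl))).2.2

theorem GenericII.augmentedMinorsNonsingular {b d p : ℕ} {j : Fin b → Fin d → ℤ}
    (hII : GenericII p j) {E : Fin (Bprime d) → Idx b d} (hinj : Injective E)
    (hE : ∀ i, E i ∈ AmbSet p j ∧ E i ∉ DegSet j ∧ (E i).2 ≠ 0) :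
    AugmentedMinorsNonsingular (of fun i => Lfun j (E i)) (fun i => Wfun j (E i)) := by
  intro ρ hρ r hr c hc hminors
  have hρB : ρ + 1 ≤ Bprime d := by simpa using Fintype.card_le_of_injective r hr
  -- `Fin.snoc` unfolds definitionally to the `dite` in `GenericII`
  exact hII E hinj hE ρ hρ (by omega) r hr c hc hminors

theorem linearized_system_has_no_solution_general
    {b d p : ℕ}
    (j : Fin b → Fin d → ℤ)
    (hI : GenericI p j) (hII : GenericII p j)
    (E : Fin (Bprime d) → Idx b d) (hinj : Function.Injective E)
    (hE : ∀ i, E i ∈ AmbSet p j ∧ E i ∉ DegSet j ∧ (E i).2 ≠ 0) :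
    ¬ ∃ X : LIdx d → ℝ, ∀ i, (∑ t, Lfun j (E i) t * X t) + Wfun j (E i) = 0 := by
  rintro ⟨X, hX⟩
  have hcard : Fintype.card (LIdx d) < Fintype.card (Fin (Bprime d)) := by
    rw [Fintype.card_fin, ← card_LIdx_add_one]
    exact Nat.lt_succ_self _
  exact (hII.augmentedMinorsNonsingular hinj hE).mulVec_add_ne_zero
    (fun i => hI.wfun_ne_zero (hE i).1 (hE i).2.2) hcard X (funext hX)

/-- under genericity (i) and (ii), the linearized system of B' affine
equations in the B'−1 unknowns has no solution. -/
theorem linearized_system_has_no_solution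
    {b d p : ℕ} (hb : 1 ≤ b) (hd : 1 ≤ d) (hp : 1 ≤ p)
    (j : Fin b → Fin d → ℤ) (hdist : Function.Injective j) (hnz : ∀ k, j k ≠ 0)
    (hI : GenericI p j) (hII : GenericII p j)
    (E : Fin (Bprime d) → Idx b d) (hinj : Function.Injective E)
    (hE : ∀ i, E i ∈ AmbSet p j ∧ E i ∉ DegSet j ∧ (E i).2 ≠ 0) :
    ¬ ∃ X : LIdx d → ℝ, ∀ i, (∑ t, Lfun j (E i) t * X t) + Wfun j (E i) = 0 :=
  linearized_system_has_no_solution_general j hI hII E hinj hE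

end NLW
end
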